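/- arXiv:2401.03174 — 5 statements merged into one kernel-verified Lean document; each statement's English description precedes it below -/
import Mathlib

section
/- For any real numbers N ≥ H ≥ 1 and any function f : ℤ → ℂ supported on {1,...,⌊N⌋}, we have |(1/⌊N⌋) ∑_{n=1}^{⌊N⌋} f(n)|² ≤ ((N+H)/⌊N⌋) · ∑_{h∈ℤ} μ_H(h) · (1/⌊N⌋) ∑_{n=1}^{⌊N⌋} conj(f(n+h)) f(n), where μ_H(h) = #{(h₁,h₂) ∈ {1,...,⌊H⌋}² : h₁ - h₂ = h} / ⌊H⌋². -/
/-!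
Write `N, H` for `⌊N⌋, ⌊H⌋` and put `F(m) = ∑_{h=1}^{H} f(m + h)`. Every value of `f` is counted
exactly `H` times in `∑_m F(m)`, so `H ∑ f = ∑_m F(m)`, and `F` is supported on `N + H - 1`
consecutive integers, so Cauchy–Schwarz gives `H² |∑ f|² ≤ (N + H) ∑_m |F(m)|²`. Expanding
`|F(m)|²` as a double sum over `h₁, h₂` and substituting `m = n - h₂` turns `∑_m |F(m)|²` into
`∑_{h₁, h₂} ∑_n conj f(n + h₁ - h₂) f(n) = H² ∑_h μ_H(h) ∑_n conj f(n + h) f(n)`.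
-/

noncomputable section

/-- The Fejér-type weight `μ_H(h) = #{(h₁,h₂) ∈ [H]² : h₁ - h₂ = h} / ⌊H⌋²`. -/
def fejerWeight (H : ℝ) (h : ℤ) : ℝ :=
  (((Finset.Icc (1:ℤ) ⌊H⌋ ×ˢ Finset.Icc (1:ℤ) ⌊H⌋).filter (fun p => p.1 - p.2 = h)).card : ℝ) /
    (⌊H⌋ : ℝ) ^ 2

open Finset ComplexConjugate

theorem norm_sum_sq_le_card_mul_sum_norm_sq {ι E : Type*} [SeminormedAddCommGroup E]
    (s : Finset ι) (x : ι → E) : ‖∑ i ∈ s, x i‖ ^ 2 ≤ #s * ∑ i ∈ s, ‖x i‖ ^ 2 :=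
  (pow_le_pow_left₀ (norm_nonneg _) (norm_sum_le s x) 2).trans sq_sum_le_card_mul_sum_sq

theorem Finset.sum_comp_add_eq_sum_Icc {M : Type*} [AddCommMonoid M] {g : ℤ → M}
    {a b c : ℤ} {s : Finset ℤ} (hg : ∀ n ∉ Icc a b, g n = 0) (hs : Icc (a - c) (b - c) ⊆ s) :
    ∑ m ∈ s, g (m + c) = ∑ n ∈ Icc a b, g n := by
  rw [← sum_subset hs fun m _ hm => hg _ (by simp only [mem_Icc] at hm ⊢; omega)]
  simpa using (sum_map (Icc (a - c) (b - c)) (addRightEmbedding c) g).symm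

theorem tsum_fejerWeight_mul (H : ℝ) (c : ℤ → ℂ) :
    ∑' h : ℤ, (fejerWeight H h : ℂ) * c h =
      ((⌊H⌋ : ℂ) ^ 2)⁻¹ * ∑ p ∈ Icc 1 ⌊H⌋ ×ˢ Icc 1 ⌊H⌋, c (p.1 - p.2) := by
  rw [sum_comp, mul_sum, tsum_eq_sum (s := (Icc 1 ⌊H⌋ ×ˢ Icc 1 ⌊H⌋).image fun p => p.1 - p.2)]
  · refine sum_congr rfl fun h _ => ?_
    simp only [fejerWeight, nsmul_eq_mul]
    push_cast
    ring
  · intro h hh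
    rw [fejerWeight, filter_false_of_mem fun p hp hph => hh (mem_image.2 ⟨p, hp, hph⟩)]
    simp

def blockSum (f : ℤ → ℂ) (K m : ℤ) : ℂ := ∑ h ∈ Icc 1 K, f (m + h)

section BlockSum

variable {f : ℤ → ℂ} {N K : ℤ}

theorem sum_blockSum (hf : ∀ n ∉ Icc 1 N, f n = 0) (hK : 0 ≤ K) :
    ∑ m ∈ Icc (1 - K) (N - 1), blockSum f K m = K * ∑ n ∈ Icc 1 N, f n := by
  simp only [blockSum]
  rw [sum_comm, sum_congr rfl fun h hh => sum_comp_add_eq_sum_Icc hf ?_, sum_const, Int.card_Icc,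
    nsmul_eq_mul, add_sub_cancel_right, ← Int.cast_natCast, Int.toNat_of_nonneg hK]
  rw [mem_Icc] at hh
  exact Icc_subset_Icc (by omega) (by omega)

theorem sum_norm_sq_blockSum (hf : ∀ n ∉ Icc 1 N, f n = 0) :
    ((∑ m ∈ Icc (1 - K) (N - 1), ‖blockSum f K m‖ ^ 2 : ℝ) : ℂ) =
      ∑ p ∈ Icc 1 K ×ˢ Icc 1 K, ∑ n ∈ Icc 1 N, conj (f (n + (p.1 - p.2))) * f n := by
  push_cast
  simp only [← Complex.conj_mul', blockSum, map_sum, sum_mul_sum, sum_product]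
  rw [sum_comm]
  refine sum_congr rfl fun h₁ _ => ?_
  rw [sum_comm]
  refine sum_congr rfl fun h₂ hh₂ => ?_
  refine Eq.trans ?_
    (sum_comp_add_eq_sum_Icc (c := h₂) (s := Icc (1 - K) (N - 1)) (fun n hn => ?_) ?_)
  · simp only [add_add_sub_cancel]
  · rw [hf n hn, mul_zero]
  · rw [mem_Icc] at hh₂
    exact Icc_subset_Icc (by omega) (by omega)

theorem sq_mul_norm_sum_le_mul_sum_norm_sq_blockSum (hf : ∀ n ∉ Icc 1 N, f n = 0) (hK : 0 ≤ K)
    (hN : 1 ≤ N) :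
    ((K : ℝ) * ‖∑ n ∈ Icc 1 N, f n‖) ^ 2 ≤
      (N + K - 1 : ℤ) * ∑ m ∈ Icc (1 - K) (N - 1), ‖blockSum f K m‖ ^ 2 := by
  have hcard : (#(Icc (1 - K) (N - 1)) : ℤ) = N + K - 1 := by
    rw [Int.card_Icc, Int.toNat_of_nonneg] <;> omega
  calc _ = ‖∑ m ∈ Icc (1 - K) (N - 1), blockSum f K m‖ ^ 2 := by
        rw [sum_blockSum hf hK, norm_mul, Complex.norm_intCast,
          abs_of_nonneg (by exact_mod_cast hK)]
    _ ≤ _ := norm_sum_sq_le_card_mul_sum_norm_sq _ _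
    _ = _ := by rw [← hcard, Int.cast_natCast]

end BlockSum

/-- Van der Corput's inequality. -/
theorem van_der_corput (N H : ℝ) (hH : 1 ≤ H) (hHN : H ≤ N) (f : ℤ → ℂ)
    (hsupp : ∀ n : ℤ, n ∉ Finset.Icc (1:ℤ) ⌊N⌋ → f n = 0) :
    ‖(⌊N⌋ : ℂ)⁻¹ * ∑ n ∈ Finset.Icc (1:ℤ) ⌊N⌋, f n‖ ^ 2 ≤
      (N + H) / (⌊N⌋ : ℝ) *
        (∑' h : ℤ, ((fejerWeight H h : ℂ) *
          ((⌊N⌋ : ℂ)⁻¹ * ∑ n ∈ Finset.Icc (1:ℤ) ⌊N⌋,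
            (starRingEnd ℂ) (f (n + h)) * f n))).re := by
  have hK : 1 ≤ ⌊H⌋ := Int.le_floor.2 (by simpa using hH)
  have hM : 1 ≤ ⌊N⌋ := Int.le_floor.2 (by simpa using hH.trans hHN)
  have hMr : (0 : ℝ) < ⌊N⌋ := by exact_mod_cast hM
  have hQ : 0 ≤ ∑ m ∈ Icc (1 - ⌊H⌋) (⌊N⌋ - 1), ‖blockSum f ⌊H⌋ m‖ ^ 2 := by positivity
  set Q := ∑ m ∈ Icc (1 - ⌊H⌋) (⌊N⌋ - 1), ‖blockSum f ⌊H⌋ m‖ ^ 2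
  have hcorr : ∑' h : ℤ, (fejerWeight H h : ℂ) *
      ((⌊N⌋ : ℂ)⁻¹ * ∑ n ∈ Icc 1 ⌊N⌋, conj (f (n + h)) * f n) =
        (((⌊H⌋ : ℝ) ^ 2)⁻¹ * (⌊N⌋ : ℝ)⁻¹ * Q : ℝ) := by
    rw [tsum_fejerWeight_mul, ← mul_sum, ← sum_norm_sq_blockSum hsupp]
    simp only [Complex.ofReal_mul, Complex.ofReal_inv, Complex.ofReal_pow, Complex.ofReal_intCast]
    ring
  rw [hcorr, Complex.ofReal_re, norm_mul, norm_inv, Complex.norm_intCast, abs_of_pos hMr]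
  calc ((⌊N⌋ : ℝ)⁻¹ * ‖∑ n ∈ Icc 1 ⌊N⌋, f n‖) ^ 2
        = ((⌊H⌋ : ℝ) * ‖∑ n ∈ Icc 1 ⌊N⌋, f n‖) ^ 2 / ((⌊H⌋ : ℝ) ^ 2 * (⌊N⌋ : ℝ) ^ 2) := by
        field_simp
    _ ≤ (⌊N⌋ + ⌊H⌋ - 1 : ℤ) * Q / ((⌊H⌋ : ℝ) ^ 2 * (⌊N⌋ : ℝ) ^ 2) := by
        gcongr
        exact sq_mul_norm_sum_le_mul_sum_norm_sq_blockSum hsupp (by omega) hM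
    _ ≤ (N + H) * Q / ((⌊H⌋ : ℝ) ^ 2 * (⌊N⌋ : ℝ) ^ 2) := by
        gcongr
        push_cast
        linarith [Int.floor_le N, Int.floor_le H]
    _ = (N + H) / ⌊N⌋ * (((⌊H⌋ : ℝ) ^ 2)⁻¹ * (⌊N⌋ : ℝ)⁻¹ * Q) := by
        field_simp
end
end

section
/- Let N ≥ 1 be an integer and f : {1,...,N} → ℂ with |f(n)| ≤ 1 for all n, and let δ ∈ (0,1). If ‖f‖_{U²[N]} ≥ δ, then there exists α ∈ ℝ such that |(1/N) ∑_{n=1}^N f(n) e(−αn)| ≫ δ², where e(x) = e^{2πix} and the implied constant is absolute. -/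
noncomputable section

open scoped Classical

/-- `e(x) = e^{2πix}`. -/
def e (x : ℝ) : ℂ := Complex.exp (2 * Real.pi * Complex.I * x)

/-- The Gowers box sum `∑_{x,h₁,…,h_s} ∏_{ω ∈ {0,1}^s} f_ω(x + ω·(h₁,…,h_s))`. -/
def gowersInner (s : ℕ) (f : (Fin s → Bool) → ℤ → ℂ) : ℂ :=
  ∑' p : ℤ × (Fin s → ℤ), ∏ ω : Fin s → Bool,
    f ω (p.1 + ∑ i, if ω i then p.2 i else 0)

/-- `C^{|ω|} f`, i.e. `f` conjugated `|ω|` times. -/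
def conjPow (s : ℕ) (ω : Fin s → Bool) (f : ℤ → ℂ) : ℤ → ℂ :=
  if Odd ((Finset.univ.filter (fun i => ω i = true)).card) then fun n => (starRingEnd ℂ) (f n)
  else f

/-- The unnormalised Gowers `Ũ^s(ℤ)` norm. -/
def gowersUnnorm (s : ℕ) (f : ℤ → ℂ) : ℝ :=
  (gowersInner s (fun ω => conjPow s ω f)).re ^ ((1 : ℝ) / 2 ^ s)

/-- The normalised Gowers `U^s[N]` norm. -/
def gowersUN (s : ℕ) (f : ℤ → ℂ) (N : ℝ) : ℝ :=
  gowersUnnorm s (fun n => if n ∈ Finset.Icc 1 ⌊N⌋ then f n else 0) /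
    gowersUnnorm s (fun n => if n ∈ Finset.Icc 1 ⌊N⌋ then 1 else 0)

/-!
For `g` supported on a finite `S ⊆ ℤ`, the `Ũ²(ℤ)` sum equals `∑ₕ |B(h)|²` with
`B(h) = ∑_y conj (g y) g (y + h)`, and the exponential sum of `B` is `|ĝ|²`. Sample `ĝ` at the
frequencies `k / M`, with `M = 2N` so large that `S - S` injects into `ℤ / M`; Parseval's identity,
applied to `g` and to `B`, then gives `M ‖g‖⁴ = ∑ₖ |ĝ(k/M)|⁴ ≤ maxₖ |ĝ(k/M)|² · M ∑ₙ |g n|²`.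
For `f` this is `‖f‖⁴ ≤ N maxₖ |f̂(k/M)|²`, while the term `k = 0` alone gives
`‖1_[N]‖⁴ ≥ N⁴ / M = N³ / 2`; so `δ ≤ ‖f‖ / ‖1_[N]‖` forces `maxₖ |f̂(k/M)| ≥ δ² N / √2`.
-/

open Finset Complex
open scoped Pointwise ComplexConjugate

lemma e_add (x y : ℝ) : e (x + y) = e x * e y := by
  simp only [e, ofReal_add, mul_add, Complex.exp_add]

lemma conj_e (x : ℝ) : conj (e x) = e (-x) := by
  simp only [e, ← Complex.exp_conj, map_mul, conj_I, conj_ofReal, map_ofNat, ofReal_neg]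
  ring_nf

lemma e_zero : e 0 = 1 := by simp [e]

lemma sum_range_e_div_mul {M : ℕ} (hM : 0 < M) (d : ℤ) :
    ∑ k ∈ range M, e (k / M * d) = if (M : ℤ) ∣ d then (M : ℂ) else 0 := by
  set ζ := Complex.exp (2 * Real.pi * I / M)
  have hζ : IsPrimitiveRoot ζ M := Complex.isPrimitiveRoot_exp M hM.ne'
  have hpow (k : ℕ) : e (k / M * d) = (ζ ^ d) ^ k := by
    rw [← zpow_natCast, ← zpow_mul, ← Complex.exp_int_mul, e]
    congr 1
    push_cast
    ring
  simp_rw [hpow]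
  split_ifs with hd
  · simp [(hζ.zpow_eq_one_iff_dvd d).mpr hd]
  · have hne : ζ ^ d ≠ 1 := fun h => hd ((hζ.zpow_eq_one_iff_dvd d).mp h)
    rw [geom_sum_eq hne, ← zpow_natCast, ← zpow_mul, mul_comm, zpow_mul, zpow_natCast,
      hζ.pow_eq_one, one_zpow, sub_self, zero_div]

lemma sum_comp_add_eq_sum {G β : Type*} [AddCommGroup G] [AddCommMonoid β] {S D : Finset G}
    {F : G → β} (hF : ∀ y ∉ S, F y = 0) (x : G) (hD : ∀ y ∈ S, y - x ∈ D) :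
    ∑ h ∈ D, F (x + h) = ∑ y ∈ S, F y := by
  refine (Finset.sum_map D (addLeftEmbedding x) F).symm.trans
    (Finset.sum_subset (fun y hy => ?_) fun y _ hy => hF y hy).symm
  exact Finset.mem_map.mpr ⟨y - x, hD y hy, add_sub_cancel x y⟩

def expSum (S : Finset ℤ) (g : ℤ → ℂ) (α : ℝ) : ℂ :=
  ∑ n ∈ S, g n * e (-(α * n))

lemma expSum_mul_conj (S : Finset ℤ) (g : ℤ → ℂ) (α : ℝ) :
    expSum S g α * conj (expSum S g α) =
      ∑ a ∈ S, ∑ b ∈ S, g a * conj (g b) * e (α * (b - a)) := by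
  simp only [expSum, map_sum, map_mul, conj_e, neg_neg, sum_mul_sum]
  refine sum_congr rfl fun a _ => sum_congr rfl fun b _ => ?_
  rw [show α * (b - a) = -(α * a) + α * b by ring, e_add]
  ring

theorem sum_norm_expSum_sq {M : ℕ} (hM : 0 < M) {S : Finset ℤ}
    (hS : ∀ a ∈ S, ∀ b ∈ S, (M : ℤ) ∣ b - a → a = b) (g : ℤ → ℂ) :
    ∑ k ∈ range M, ‖expSum S g (k / M)‖ ^ 2 = M * ∑ n ∈ S, ‖g n‖ ^ 2 := by
  apply Complex.ofReal_injective
  push_cast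
  simp_rw [← mul_conj', expSum_mul_conj]
  rw [sum_comm]
  refine (sum_congr rfl fun a ha => ?_).trans (mul_sum _ _ _).symm
  rw [sum_comm]
  simp_rw [← mul_sum, ← Int.cast_sub, sum_range_e_div_mul hM]
  rw [sum_eq_single_of_mem a ha fun b hb hba => by
    rw [if_neg fun h => hba (hS a ha b hb h).symm, mul_zero]]
  simp only [sub_self, dvd_zero, if_true]
  ring

def autocorr (S : Finset ℤ) (g : ℤ → ℂ) (h : ℤ) : ℂ :=
  ∑ y ∈ S, conj (g y) * g (y + h)

lemma expSum_autocorr {S : Finset ℤ} {g : ℤ → ℂ} (hg : ∀ n ∉ S, g n = 0) (α : ℝ) :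
    expSum (S - S) (autocorr S g) α = (‖expSum S g α‖ ^ 2 : ℝ) := by
  push_cast
  rw [← mul_conj', mul_comm, expSum, expSum, map_sum, sum_mul]
  simp only [autocorr, sum_mul]
  rw [sum_comm]
  refine sum_congr rfl fun y hy => ?_
  have hshift : ∑ h ∈ S - S, g (y + h) * e (-(α * ↑(y + h))) =
      ∑ n ∈ S, g n * e (-(α * n)) :=
    sum_comp_add_eq_sum (F := fun n => g n * e (-(α * n))) (fun n hn => by simp [hg n hn]) y
      fun n hn => sub_mem_sub hn hy
  rw [← hshift, mul_sum]
  refine sum_congr rfl fun h _ => ?_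
  rw [map_mul, conj_e, neg_neg, show -(α * ↑(y + h)) = -(α * y) + -(α * h) by push_cast; ring,
    e_add]
  have hcancel : e (α * y) * e (-(α * y)) = 1 := by rw [← e_add, add_neg_cancel, e_zero]
  linear_combination (conj (g y) * g (y + h) * e (-(α * h))) * hcancel.symm

lemma prod_conjPow_two (g : ℤ → ℂ) (x : ℤ) (h : Fin 2 → ℤ) :
    ∏ ω : Fin 2 → Bool, conjPow 2 ω g (x + ∑ i, if ω i then h i else 0) =
      g x * conj (g (x + h 0)) * conj (g (x + h 1)) * g (x + (h 0 + h 1)) := by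
  rw [← (piFinTwoEquiv fun _ => Bool).symm.prod_comp, Fintype.prod_prod_type]
  simp +decide [conjPow, Fin.sum_univ_two]
  ring

lemma gowersInner_two_eq_sum {S : Finset ℤ} {g : ℤ → ℂ} (hg : ∀ n ∉ S, g n = 0) :
    gowersInner 2 (fun ω => conjPow 2 ω g) =
      ∑ x ∈ S, ∑ y ∈ S, ∑ z ∈ S, g x * conj (g y) * conj (g z) * g (y + z - x) := by
  let E : ℤ × (Fin 2 → ℤ) ≃ ℤ × ℤ × ℤ :=
    ((Equiv.refl ℤ).prodCongr (piFinTwoEquiv fun _ => ℤ)).trans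
      (Equiv.prodShear (Equiv.refl ℤ) fun x => (Equiv.addLeft x).prodCongr (Equiv.addLeft x))
  rw [gowersInner, ← E.symm.tsum_eq]
  simp only [prod_conjPow_two]
  rw [tsum_eq_sum (s := S ×ˢ S ×ˢ S), sum_product, sum_congr rfl fun x _ => sum_product _ _ _]
  · refine sum_congr rfl fun x _ => sum_congr rfl fun y _ => sum_congr rfl fun z _ => ?_
    rw [show y + z - x = x + (-x + y + (-x + z)) by ring]
    simp [E]
  · rintro ⟨x, y, z⟩ hq
    simp only [mem_product, not_and_or] at hq
    rcases hq with hx | hy | hz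
    · simp [E, hg x hx]
    · simp [E, hg y hy]
    · simp [E, hg z hz]

lemma gowersInner_two_eq_sum_norm_autocorr_sq {S : Finset ℤ} {g : ℤ → ℂ}
    (hg : ∀ n ∉ S, g n = 0) :
    gowersInner 2 (fun ω => conjPow 2 ω g) = (∑ h ∈ S - S, ‖autocorr S g h‖ ^ 2 : ℝ) := by
  rw [gowersInner_two_eq_sum hg, sum_comm]
  push_cast
  simp only [← mul_conj', autocorr, map_sum, map_mul, conj_conj, sum_mul_sum]
  conv_rhs => rw [sum_comm]
  refine sum_congr rfl fun y _ => ?_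
  conv_rhs => rw [sum_comm]
  refine sum_congr rfl fun x hx => ?_
  rw [← sum_comp_add_eq_sum (F := fun z => g x * conj (g y) * conj (g z) * g (y + z - x))
    (fun z hz => by simp [hg z hz]) x fun z hz => sub_mem_sub hz hx]
  refine sum_congr rfl fun h _ => ?_
  rw [show y + (x + h) - x = y + h by ring]
  ring

lemma gowersUnnorm_two_pow_four {S : Finset ℤ} {g : ℤ → ℂ} (hg : ∀ n ∉ S, g n = 0) :
    gowersUnnorm 2 g ^ 4 = ∑ h ∈ S - S, ‖autocorr S g h‖ ^ 2 := by
  rw [gowersUnnorm, gowersInner_two_eq_sum_norm_autocorr_sq hg, ofReal_re, ← Real.rpow_natCast,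
    ← Real.rpow_mul (by positivity)]
  norm_num

theorem mul_gowersUnnorm_two_pow_four {M : ℕ} (hM : 0 < M) {S : Finset ℤ}
    (hS : ∀ a ∈ S - S, ∀ b ∈ S - S, (M : ℤ) ∣ b - a → a = b) {g : ℤ → ℂ}
    (hg : ∀ n ∉ S, g n = 0) :
    M * gowersUnnorm 2 g ^ 4 = ∑ k ∈ range M, ‖expSum S g (k / M)‖ ^ 4 := by
  rw [gowersUnnorm_two_pow_four hg, ← sum_norm_expSum_sq hM hS]
  refine sum_congr rfl fun k _ => ?_
  rw [expSum_autocorr hg, norm_real, Real.norm_of_nonneg (by positivity)]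
  ring

theorem exists_gowersUnnorm_two_pow_four_le {M : ℕ} (hM : 0 < M) {S : Finset ℤ}
    (hS : ∀ a ∈ S - S, ∀ b ∈ S - S, (M : ℤ) ∣ b - a → a = b) {g : ℤ → ℂ}
    (hg : ∀ n ∉ S, g n = 0) (hg1 : ∀ n, ‖g n‖ ≤ 1) :
    ∃ k : ℕ, gowersUnnorm 2 g ^ 4 ≤ #S * ‖expSum S g (k / M)‖ ^ 2 := by
  obtain ⟨k, -, hk⟩ := exists_max_image (range M) (fun k : ℕ => ‖expSum S g (k / M)‖)
    (nonempty_range_iff.mpr hM.ne')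
  refine ⟨k, le_of_mul_le_mul_left ?_ (Nat.cast_pos.mpr hM : (0 : ℝ) < M)⟩
  have hSinj : ∀ a ∈ S, ∀ b ∈ S, (M : ℤ) ∣ b - a → a = b := fun a ha b hb hab => by
    have := hS _ (sub_mem_sub ha ha) _ (sub_mem_sub hb ha) (by rwa [sub_self, sub_zero])
    linarith
  calc M * gowersUnnorm 2 g ^ 4
      = ∑ j ∈ range M, ‖expSum S g (j / M)‖ ^ 2 * ‖expSum S g (j / M)‖ ^ 2 := by
        rw [mul_gowersUnnorm_two_pow_four hM hS hg]
        exact sum_congr rfl fun j _ => by ring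
    _ ≤ ∑ j ∈ range M, ‖expSum S g (k / M)‖ ^ 2 * ‖expSum S g (j / M)‖ ^ 2 := by
        gcongr with j hj
        exact hk j hj
    _ = ‖expSum S g (k / M)‖ ^ 2 * (M * ∑ n ∈ S, ‖g n‖ ^ 2) := by
        rw [← mul_sum, sum_norm_expSum_sq hM hSinj]
    _ ≤ ‖expSum S g (k / M)‖ ^ 2 * (M * ∑ n ∈ S, 1) := by
        gcongr with n
        exact pow_le_one₀ (norm_nonneg _) (hg1 n)
    _ = M * (#S * ‖expSum S g (k / M)‖ ^ 2) := by
        rw [sum_const, nsmul_one]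
        ring

theorem card_pow_four_le_mul_gowersUnnorm_two_indicator {M : ℕ} (hM : 0 < M) {S : Finset ℤ}
    (hS : ∀ a ∈ S - S, ∀ b ∈ S - S, (M : ℤ) ∣ b - a → a = b) :
    (#S : ℝ) ^ 4 ≤ M * gowersUnnorm 2 (fun n => if n ∈ S then 1 else 0) ^ 4 := by
  rw [mul_gowersUnnorm_two_pow_four hM hS fun n hn => if_neg hn]
  have hzero : expSum S (fun n => if n ∈ S then 1 else 0) ((0 : ℕ) / M) = #S := by
    simp [expSum, e_zero]
  calc (#S : ℝ) ^ 4 = ‖expSum S (fun n => if n ∈ S then 1 else 0) ((0 : ℕ) / M)‖ ^ 4 := by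
        rw [hzero, norm_natCast]
    _ ≤ _ := single_le_sum (f := fun k : ℕ => ‖expSum S _ (k / M)‖ ^ 4)
        (fun k _ => by positivity) (mem_range.mpr hM)

lemma eq_of_dvd_sub_of_mem_Icc_sub_Icc {N : ℕ} {a b : ℤ} (ha : a ∈ Icc 1 (N : ℤ) - Icc 1 (N : ℤ))
    (hb : b ∈ Icc 1 (N : ℤ) - Icc 1 (N : ℤ)) (hab : ((2 * N : ℕ) : ℤ) ∣ b - a) : a = b := by
  obtain ⟨a₁, ha₁, a₂, ha₂, rfl⟩ := mem_sub.mp ha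
  obtain ⟨b₁, hb₁, b₂, hb₂, rfl⟩ := mem_sub.mp hb
  rw [mem_Icc] at ha₁ ha₂ hb₁ hb₂
  have hsmall : |b₁ - b₂ - (a₁ - a₂)| < ((2 * N : ℕ) : ℤ) := abs_lt.mpr ⟨by omega, by omega⟩
  linarith [Int.eq_zero_of_abs_lt_dvd hab hsmall]

lemma gowersUN_natCast {s N : ℕ} {f : ℤ → ℂ} (hf : ∀ n ∉ Icc 1 (N : ℤ), f n = 0) :
    gowersUN s f N =
      gowersUnnorm s f / gowersUnnorm s (fun n => if n ∈ Icc 1 (N : ℤ) then 1 else 0) := by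
  simp only [gowersUN, Int.floor_natCast]
  congr 2
  funext n
  split_ifs with hn
  · rfl
  · exact (hf n hn).symm

theorem exists_gowersUN_two_pow_four_le {N : ℕ} (hN : 1 ≤ N) {f : ℤ → ℂ}
    (hf : ∀ n ∉ Icc 1 (N : ℤ), f n = 0) (hf1 : ∀ n, ‖f n‖ ≤ 1) :
    ∃ α : ℝ, gowersUN 2 f N ^ 4 * N ^ 2 ≤ 2 * ‖expSum (Icc 1 (N : ℤ)) f α‖ ^ 2 := by
  have hM : 0 < 2 * N := by omega
  have hS := fun a ha b hb => eq_of_dvd_sub_of_mem_Icc_sub_Icc (N := N) (a := a) (b := b) ha hb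
  obtain ⟨k, hk⟩ := exists_gowersUnnorm_two_pow_four_le hM hS hf hf1
  have hU := card_pow_four_le_mul_gowersUnnorm_two_indicator hM hS
  simp only [Int.card_Icc, add_sub_cancel_right, Int.toNat_natCast] at hk hU
  push_cast at hU
  set X := ‖expSum (Icc 1 (N : ℤ)) f (k / (2 * N : ℕ))‖
  set U := gowersUnnorm 2 (fun n => if n ∈ Icc 1 (N : ℤ) then 1 else 0)
  have hN0 : (0 : ℝ) < N := by exact_mod_cast hN
  have hU4 : 0 < U ^ 4 := by nlinarith [pow_pos hN0 4]
  refine ⟨k / (2 * N : ℕ), ?_⟩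
  rw [gowersUN_natCast hf, div_pow, div_mul_eq_mul_div, div_le_iff₀ hU4]
  calc gowersUnnorm 2 f ^ 4 * N ^ 2 ≤ N * X ^ 2 * N ^ 2 := by gcongr
    _ = N ^ 4 * X ^ 2 / N := by field_simp
    _ ≤ 2 * N * U ^ 4 * X ^ 2 / N := by gcongr
    _ = 2 * X ^ 2 * U ^ 4 := by field_simp

/-- The classical `U²[N]` inverse theorem. -/
theorem u2_inverse : ∃ c : ℝ, 0 < c ∧ ∀ (N : ℕ), 1 ≤ N → ∀ f : ℤ → ℂ,
    (∀ n : ℤ, n ∉ Finset.Icc (1:ℤ) (N:ℤ) → f n = 0) → (∀ n, ‖f n‖ ≤ 1) →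
    ∀ δ : ℝ, 0 < δ → δ < 1 → δ ≤ gowersUN 2 f N →
    ∃ α : ℝ, c * δ ^ 2 ≤
      ‖(N : ℂ)⁻¹ * ∑ n ∈ Finset.Icc (1:ℤ) (N:ℤ), f n * e (-(α * n))‖ := by
  refine ⟨1 / 2, by norm_num, fun N hN f hf hf1 δ hδ _ hδf => ?_⟩
  obtain ⟨α, hα⟩ := exists_gowersUN_two_pow_four_le hN hf hf1
  set X := ‖expSum (Icc 1 (N : ℤ)) f α‖
  have hN0 : (0 : ℝ) < N := by exact_mod_cast hN
  have hsq : (δ ^ 2 * N / 2) ^ 2 ≤ X ^ 2 := by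
    have hδ4 := pow_le_pow_left₀ hδ.le hδf 4
    nlinarith [pow_pos hN0 2]
  have hX : δ ^ 2 * N / 2 ≤ X :=
    (pow_le_pow_iff_left₀ (by positivity) (norm_nonneg _) two_ne_zero).mp hsq
  refine ⟨α, ?_⟩
  change _ ≤ ‖(N : ℂ)⁻¹ * expSum (Icc 1 (N : ℤ)) f α‖
  rw [norm_mul, norm_inv, Complex.norm_natCast, le_inv_mul_iff₀ hN0]
  linarith
end
end

section
/- Let X ≥ Y ≥ Y' ≥ 1 be real numbers with Y ≤ X, and let a : ℤ → ℂ satisfy |a(n)| ≤ 1 for all n. Then 𝔼_{m ∈ [−X,X]∩ℤ} |𝔼_{y ∈ [Y]} a(m+y)| ≪ 𝔼_{m ∈ [−X,X]∩ℤ} |𝔼_{y ∈ [Y']} a(m+y)| + Y'/Y + Y/X, where 𝔼 denotes the average over the indicated finite set of integers and the implied constant is absolute. -/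
/-!
Write `W_L(n) = ∑_{i<L} a(n+i)`. Moving a window by `t` changes its sum by at most `2t`, so
`L' W_L(n) = ∑_{j<L'} W_L(n+j) + O(L'^2)`, and that double sum is `∑_{i<L} W_{L'}(n+i)`. Hence
`L' |W_L(n)| ≤ ∑_{i<L} |W_{L'}(n+i)| + O(L'^2)`. Summing over `M` consecutive `n` and moving the
outer window by each `i < L` at a cost of `O(L L')` gives, after dividing by `L L' M`,
the error terms `L/M + L'/L`.
-/

open Finset

def windowSum {E : Type*} [AddCommMonoid E] (g : ℤ → E) (L : ℕ) (n : ℤ) : E :=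
  ∑ i ∈ range L, g (n + i)

theorem sum_windowSum_comm {E : Type*} [AddCommMonoid E] (g : ℤ → E) (L L' : ℕ) (n : ℤ) :
    ∑ j ∈ range L', windowSum g L (n + j) = ∑ i ∈ range L, windowSum g L' (n + i) := by
  simp only [windowSum]
  rw [sum_comm]
  refine sum_congr rfl fun i _ => sum_congr rfl fun j _ => ?_
  rw [add_right_comm]

section Normed

variable {E : Type*} [SeminormedAddCommGroup E] {g : ℤ → E} {C : ℝ}

theorem windowSum_add_one_sub (g : ℤ → E) (L : ℕ) (n : ℤ) :
    windowSum g L (n + 1) - windowSum g L n = g (n + L) - g n := by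
  have h := sum_range_succ' (fun i : ℕ => g (n + i)) L
  rw [sum_range_succ] at h
  simp only [windowSum, Nat.cast_add, Nat.cast_one, Nat.cast_zero, add_zero] at h ⊢
  simp only [add_right_comm n 1, ← add_assoc] at h ⊢
  rw [sub_eq_sub_iff_add_eq_add, ← h, add_comm]

theorem norm_windowSum_le (hg : ∀ n, ‖g n‖ ≤ C) (L : ℕ) (n : ℤ) :
    ‖windowSum g L n‖ ≤ L * C := by
  simpa [windowSum] using norm_sum_le_of_le (range L) fun i _ => hg (n + i)

theorem norm_windowSum_add_sub_le (hg : ∀ n, ‖g n‖ ≤ C) (L : ℕ) (n : ℤ) (t : ℕ) :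
    ‖windowSum g L (n + t) - windowSum g L n‖ ≤ 2 * t * C := by
  induction t with
  | zero => simp
  | succ t ih =>
    have step : ‖windowSum g L (n + t + 1) - windowSum g L (n + t)‖ ≤ 2 * C := by
      rw [windowSum_add_one_sub]
      linarith [norm_sub_le (g (n + t + L)) (g (n + t)), hg (n + t + L), hg (n + t)]
    calc ‖windowSum g L (n + (t + 1 : ℕ)) - windowSum g L n‖
        = ‖(windowSum g L (n + t + 1) - windowSum g L (n + t))
            + (windowSum g L (n + t) - windowSum g L n)‖ := by
          rw [sub_add_sub_cancel, Nat.cast_succ, add_assoc]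
      _ ≤ 2 * C + 2 * t * C := (norm_add_le _ _).trans (add_le_add step ih)
      _ = 2 * (t + 1 : ℕ) * C := by push_cast; ring

theorem mul_norm_windowSum_le [NormedSpace ℝ E] (hg : ∀ n, ‖g n‖ ≤ C) (L L' : ℕ) (n : ℤ) :
    L' * ‖windowSum g L n‖ ≤
      windowSum (fun m => ‖windowSum g L' m‖) L n + 2 * L' ^ 2 * C := by
  have hC : 0 ≤ C := (norm_nonneg _).trans (hg 0)
  have hdecomp : (L' : ℝ) • windowSum g L n = ∑ j ∈ range L', windowSum g L (n + j)
      - ∑ j ∈ range L', (windowSum g L (n + j) - windowSum g L n) := by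
    rw [sum_sub_distrib, sum_const, card_range, Nat.cast_smul_eq_nsmul, sub_sub_cancel]
  have herr : ‖∑ j ∈ range L', (windowSum g L (n + j) - windowSum g L n)‖ ≤ 2 * L' ^ 2 * C :=
    calc _ ≤ ∑ _j ∈ range L', 2 * L' * C := norm_sum_le_of_le _ fun j hj =>
          (norm_windowSum_add_sub_le hg L n j).trans <| by
            gcongr; exact_mod_cast (mem_range.mp hj).le
      _ = 2 * L' ^ 2 * C := by simp; ring
  calc (L' : ℝ) * ‖windowSum g L n‖ = ‖(L' : ℝ) • windowSum g L n‖ := by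
        rw [norm_smul, Real.norm_natCast]
    _ ≤ ‖∑ j ∈ range L', windowSum g L (n + j)‖
        + ‖∑ j ∈ range L', (windowSum g L (n + j) - windowSum g L n)‖ := by
        rw [hdecomp]; exact norm_sub_le _ _
    _ ≤ windowSum (fun m => ‖windowSum g L' m‖) L n + 2 * L' ^ 2 * C := by
        rw [sum_windowSum_comm]; exact add_le_add (norm_sum_le _ _) herr

theorem windowSum_le_add_of_norm_le {F : ℤ → ℝ} (hF : ∀ n, ‖F n‖ ≤ C) (M : ℕ) (n : ℤ) (t : ℕ) :
    windowSum F M (n + t) ≤ windowSum F M n + 2 * t * C := by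
  have := (le_abs_self _).trans (norm_windowSum_add_sub_le hF M n t)
  linarith

theorem mul_windowSum_norm_windowSum_le [NormedSpace ℝ E] (hg : ∀ n, ‖g n‖ ≤ C)
    (L L' M : ℕ) (n : ℤ) :
    L' * windowSum (fun m => ‖windowSum g L m‖) M n ≤
      L * windowSum (fun m => ‖windowSum g L' m‖) M n + 2 * L ^ 2 * L' * C
        + 2 * M * L' ^ 2 * C := by
  set F := fun m => ‖windowSum g L' m‖
  have hF : ∀ m, ‖F m‖ ≤ L' * C := fun m => by
    simpa [F] using norm_windowSum_le hg L' m
  have hshift : ∀ i ∈ range L, windowSum F M (n + i) ≤ windowSum F M n + 2 * L * (L' * C) :=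
    fun i hi => (windowSum_le_add_of_norm_le hF M n i).trans <| by
      have : 0 ≤ L' * C := (norm_nonneg _).trans (hF 0)
      gcongr; exact_mod_cast (mem_range.mp hi).le
  calc (L' : ℝ) * windowSum (fun m => ‖windowSum g L m‖) M n
      = ∑ k ∈ range M, L' * ‖windowSum g L (n + k)‖ := mul_sum _ _ _
    _ ≤ ∑ k ∈ range M, (windowSum F L (n + k) + 2 * L' ^ 2 * C) :=
        sum_le_sum fun k _ => mul_norm_windowSum_le hg L L' (n + k)
    _ = ∑ i ∈ range L, windowSum F M (n + i) + 2 * M * L' ^ 2 * C := by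
        rw [sum_add_distrib, sum_windowSum_comm]; simp; ring
    _ ≤ ∑ _i ∈ range L, (windowSum F M n + 2 * L * (L' * C)) + 2 * M * L' ^ 2 * C := by
        gcongr with i hi; exact hshift i hi
    _ = L * windowSum F M n + 2 * L ^ 2 * L' * C + 2 * M * L' ^ 2 * C := by simp; ring

theorem windowSum_norm_windowSum_div_le [NormedSpace ℝ E] (hg : ∀ n, ‖g n‖ ≤ C)
    {L L' M : ℕ} (hL : 0 < L) (hL' : 0 < L') (hM : 0 < M) (n : ℤ) :
    windowSum (fun m => ‖windowSum g L m‖) M n / (L * M) ≤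
      windowSum (fun m => ‖windowSum g L' m‖) M n / (L' * M) + 2 * L * C / M
        + 2 * L' * C / L := by
  calc windowSum (fun m => ‖windowSum g L m‖) M n / (L * M)
      = L' * windowSum (fun m => ‖windowSum g L m‖) M n / (L * L' * M) := by
        field_simp
    _ ≤ (L * windowSum (fun m => ‖windowSum g L' m‖) M n + 2 * L ^ 2 * L' * C
          + 2 * M * L' ^ 2 * C) / (L * L' * M) := by
        gcongr; exact mul_windowSum_norm_windowSum_le hg L L' M n
    _ = _ := by field_simp

end Normed

theorem sum_Icc_eq_windowSum {E : Type*} [AddCommMonoid E] (g : ℤ → E) (a b : ℤ) :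
    ∑ m ∈ Icc a b, g m = windowSum g (b + 1 - a).toNat a := by
  rw [Int.Icc_eq_finset_map, sum_map]
  rfl

theorem windowSum_comp_add_left {E : Type*} [AddCommMonoid E] (g : ℤ → E) (L : ℕ) (m n : ℤ) :
    windowSum (fun y => g (m + y)) L n = windowSum g L (m + n) := by
  simp only [windowSum, add_assoc]

theorem sum_Icc_norm_average_eq (f : ℤ → ℂ) (L : ℕ) (a b : ℤ) :
    ∑ m ∈ Icc a b, ‖((L : ℤ) : ℂ)⁻¹ * ∑ y ∈ Icc 1 (L : ℤ), f (m + y)‖ =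
      windowSum (fun m => ‖windowSum f L m‖) #(Icc a b) (1 + a) / L := by
  simp only [sum_Icc_eq_windowSum _ 1, windowSum_comp_add_left, add_sub_cancel_right,
    Int.toNat_natCast, norm_mul, norm_inv, Int.cast_natCast, Complex.norm_natCast]
  rw [sum_Icc_eq_windowSum, Int.card_Icc, windowSum, windowSum, sum_div]
  refine sum_congr rfl fun k _ => ?_
  rw [inv_mul_eq_div, add_right_comm, add_comm a]

theorem le_two_mul_natFloor {R : Type*} [Semiring R] [LinearOrder R] [IsStrictOrderedRing R]
    [FloorSemiring R] {x : R} (hx : 1 ≤ x) : x ≤ 2 * ⌊x⌋₊ := by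
  have h : (1 : R) ≤ ⌊x⌋₊ := by exact_mod_cast Nat.floor_pos.2 hx
  exact (Nat.lt_floor_add_one x).le.trans (by rw [two_mul]; gcongr)

theorem le_card_Icc_neg_floor {x : ℝ} (hx : 0 ≤ x) : x ≤ #(Icc (-⌊x⌋) ⌊x⌋) := by
  have hfloor : 0 ≤ ⌊x⌋ := Int.floor_nonneg.2 hx
  have hcard : (#(Icc (-⌊x⌋) ⌊x⌋) : ℤ) = 2 * ⌊x⌋ + 1 := by rw [Int.card_Icc]; omega
  have hcard' : (#(Icc (-⌊x⌋) ⌊x⌋) : ℝ) = 2 * ⌊x⌋ + 1 := by exact_mod_cast hcard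
  have : (0 : ℝ) ≤ ⌊x⌋ := by exact_mod_cast hfloor
  linarith [Int.lt_floor_add_one x]

/-- Shortening the average: long averages of local averages of a 1-bounded sequence are
controlled by averages over shorter windows, up to the stated error terms. -/
theorem shorten_average : ∃ c : ℝ, 0 < c ∧ ∀ X Y Y' : ℝ, 1 ≤ Y' → Y' ≤ Y → Y ≤ X →
    ∀ a : ℤ → ℂ, (∀ n, ‖a n‖ ≤ 1) →
    (∑ m ∈ Finset.Icc (-⌊X⌋) ⌊X⌋,
        ‖(⌊Y⌋ : ℂ)⁻¹ * ∑ y ∈ Finset.Icc (1:ℤ) ⌊Y⌋, a (m + y)‖) /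
      ((Finset.Icc (-⌊X⌋) ⌊X⌋).card : ℝ) ≤
    c * ((∑ m ∈ Finset.Icc (-⌊X⌋) ⌊X⌋,
        ‖(⌊Y'⌋ : ℂ)⁻¹ * ∑ y ∈ Finset.Icc (1:ℤ) ⌊Y'⌋, a (m + y)‖) /
      ((Finset.Icc (-⌊X⌋) ⌊X⌋).card : ℝ) + Y' / Y + Y / X) := by
  refine ⟨4, by norm_num, fun X Y Y' hY' hY'Y hYX a ha => ?_⟩
  have hY : 1 ≤ Y := hY'.trans hY'Y
  have hX : 1 ≤ X := hY.trans hYX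
  rw [← Int.natCast_floor_eq_floor (zero_le_one.trans hY),
    ← Int.natCast_floor_eq_floor (zero_le_one.trans hY'), sum_Icc_norm_average_eq,
    sum_Icc_norm_average_eq, div_div, div_div]
  set M := #(Icc (-⌊X⌋) ⌊X⌋)
  have hXM : X ≤ M := le_card_Icc_neg_floor (by linarith)
  have key := windowSum_norm_windowSum_div_le ha (Nat.floor_pos.2 hY) (Nat.floor_pos.2 hY')
    (Nat.cast_pos.1 ((zero_lt_one.trans_le hX).trans_le hXM)) (1 + -⌊X⌋)
  have hlong : 2 * ⌊Y⌋₊ * 1 / (M : ℝ) ≤ 2 * (Y / X) := by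
    rw [mul_one, mul_div_assoc]; gcongr; exact Nat.floor_le (by linarith)
  have hshort : 2 * ⌊Y'⌋₊ * 1 / (⌊Y⌋₊ : ℝ) ≤ 4 * (Y' / Y) := by
    calc 2 * ⌊Y'⌋₊ * 1 / (⌊Y⌋₊ : ℝ) = 4 * (⌊Y'⌋₊ / (2 * ⌊Y⌋₊)) := by field_simp; ring
      _ ≤ 4 * (Y' / Y) := by
        gcongr
        exacts [Nat.floor_le (by linarith), le_two_mul_natFloor hY]
  have hV : 0 ≤ windowSum (fun m => ‖windowSum a ⌊Y'⌋₊ m‖) M (1 + -⌊X⌋) / (⌊Y'⌋₊ * M) :=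
    div_nonneg (sum_nonneg fun _ _ => norm_nonneg _) (by positivity)
  linarith [div_nonneg (by linarith : 0 ≤ Y') (by linarith : 0 ≤ Y),
    div_nonneg (by linarith : 0 ≤ Y) (by linarith : 0 ≤ X)]
end

section
/- Let r ∈ ℕ with ω(r) ≤ (log log N)^{3/2}, where ω(r) is the number of distinct prime factors of r and N ≥ 16. Then ∑_{u | r} u^{−1/2} ≤ exp(O((log log N)^{3/4})) ≪ log N. -/
/-!
The divisor sum is bounded by the Euler product `∏_{p ∣ r} (1 - p^{-1/2})⁻¹`, and
`(1 - y)⁻¹ ≤ exp (4 y)` for `0 ≤ y ≤ 3/4` turns this into `exp (4 ∑_{p ∣ r} p^{-1/2})`.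
The `ω(r)` primes dividing `r` are distinct positive integers, so their sum of `n^{-1/2}` is at
most `∑_{n ≤ ω(r)} n^{-1/2} ≤ 2 √ω(r) ≤ 2 (log log N)^{3/4}`. Finally Young's inequality gives
`8 t^{3/4} ≤ 8^4 + t`, so `exp (8 (log log N)^{3/4}) ≤ e^{8^4} log N`.
-/

open Finset Real

namespace ArithmeticFunction

-- `(0 : ℝ) ^ (-s)` is `1` when `s = 0`, hence the explicit case.
noncomputable def rpowNeg (s : ℝ) : ArithmeticFunction ℝ :=
  ⟨fun n => if n = 0 then 0 else (n : ℝ) ^ (-s), if_pos rfl⟩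

theorem rpowNeg_apply (s : ℝ) {n : ℕ} (hn : n ≠ 0) : rpowNeg s n = (n : ℝ) ^ (-s) := if_neg hn

theorem rpowNeg_nonneg (s : ℝ) (n : ℕ) : 0 ≤ rpowNeg s n := by
  rcases eq_or_ne n 0 with rfl | hn
  · simp
  · rw [rpowNeg_apply s hn]
    positivity

theorem isMultiplicative_rpowNeg (s : ℝ) : (rpowNeg s).IsMultiplicative := by
  refine ⟨by simp [rpowNeg_apply], fun {m n} _ => ?_⟩
  rcases eq_or_ne m 0 with rfl | hm
  · simp
  rcases eq_or_ne n 0 with rfl | hn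
  · simp
  rw [rpowNeg_apply s hm, rpowNeg_apply s hn, rpowNeg_apply s (mul_ne_zero hm hn), Nat.cast_mul,
    mul_rpow (Nat.cast_nonneg m) (Nat.cast_nonneg n)]

end ArithmeticFunction

open ArithmeticFunction in
theorem Nat.sum_divisors_rpow_neg_le_prod {s : ℝ} (hs : 0 < s) {r : ℕ} (hr : r ≠ 0) :
    ∑ u ∈ r.divisors, (u : ℝ) ^ (-s) ≤ ∏ p ∈ r.primeFactors, (1 - (p : ℝ) ^ (-s))⁻¹ := by
  have hmul := isMultiplicative_zeta.natCast.mul (isMultiplicative_rpowNeg s)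
  rw [← sum_congr rfl fun u hu => rpowNeg_apply s (Nat.pos_of_mem_divisors hu).ne',
    ← coe_zeta_mul_apply, hmul.multiplicative_factorization _ hr, Finsupp.prod,
    Nat.support_factorization]
  refine prod_le_prod (fun p _ => ?_) fun p hp => ?_
  · rw [coe_zeta_mul_apply]
    exact sum_nonneg fun u _ => rpowNeg_nonneg s u
  have hp := Nat.prime_of_mem_primeFactors hp
  have hpow : ∀ i, rpowNeg s (p ^ i) = ((p : ℝ) ^ (-s)) ^ i := fun i => by
    rw [rpowNeg_apply s (pow_ne_zero i hp.ne_zero), Nat.cast_pow,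
      rpow_pow_comm (Nat.cast_nonneg p)]
  rw [coe_zeta_mul_apply, Nat.sum_divisors_prime_pow hp]
  simp only [hpow]
  have hlt : (p : ℝ) ^ (-s) < 1 :=
    rpow_lt_one_of_one_lt_of_neg (by exact_mod_cast hp.one_lt) (neg_neg_of_pos hs)
  have := geom_sum_Ico_le_of_lt_one (rpow_nonneg (Nat.cast_nonneg p) (-s)) hlt
    (m := 0) (n := r.factorization p + 1)
  rwa [← range_eq_Ico, pow_zero, one_div] at this

theorem inv_one_sub_le_exp {y : ℝ} (hy₀ : 0 ≤ y) (hy : y ≤ 3 / 4) : (1 - y)⁻¹ ≤ exp (4 * y) := by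
  rw [inv_le_iff_one_le_mul₀ (by linarith)]
  nlinarith [add_one_le_exp (4 * y)]

theorem prod_inv_one_sub_le_exp_sum {ι : Type*} (s : Finset ι) {y : ι → ℝ}
    (hy₀ : ∀ i ∈ s, 0 ≤ y i) (hy : ∀ i ∈ s, y i ≤ 3 / 4) :
    ∏ i ∈ s, (1 - y i)⁻¹ ≤ exp (4 * ∑ i ∈ s, y i) := by
  rw [mul_sum, exp_sum]
  exact prod_le_prod (fun i hi => inv_nonneg.2 (by linarith [hy i hi]))
    fun i hi => inv_one_sub_le_exp (hy₀ i hi) (hy i hi)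

theorem inv_sqrt_add_two_sqrt_le {x : ℝ} (hx : 0 ≤ x) : (√(x + 1))⁻¹ + 2 * √x ≤ 2 * √(x + 1) := by
  have h1 : 0 < √(x + 1) := sqrt_pos.2 (by linarith)
  rw [inv_eq_one_div, div_add' _ _ _ h1.ne', div_le_iff₀ h1]
  nlinarith [sq_nonneg (√(x + 1) - √x), sq_sqrt hx, sq_sqrt (by linarith : 0 ≤ x + 1)]

theorem sum_inv_sqrt_le_two_sqrt_card (S : Finset ℕ) (hS : 0 ∉ S) :
    ∑ n ∈ S, (√n)⁻¹ ≤ 2 * √(#S) := by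
  induction S using Finset.induction_on_max with
  | empty => simp
  | insert a S hlt ih =>
    have haS : a ∉ S := fun h => lt_irrefl a (hlt a h)
    have hcard : #S + 1 ≤ a := by
      have : insert a S ⊆ Icc 1 a := fun n hn =>
        mem_Icc.2 ⟨Nat.one_le_iff_ne_zero.2 (ne_of_mem_of_not_mem hn hS),
          (mem_insert.1 hn).elim le_of_eq fun h => (hlt n h).le⟩
      simpa [haS] using card_le_card this
    rw [sum_insert haS, card_insert_of_notMem haS, Nat.cast_succ]
    calc (√a)⁻¹ + ∑ n ∈ S, (√n)⁻¹ ≤ (√(#S + 1))⁻¹ + 2 * √(#S) := by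
          gcongr
          · exact_mod_cast hcard
          · exact ih fun h => hS (mem_insert_of_mem h)
      _ ≤ 2 * √(#S + 1) := inv_sqrt_add_two_sqrt_le (Nat.cast_nonneg _)

theorem mul_rpow_three_quarters_le {a x : ℝ} (ha : 0 ≤ a) (hx : 0 ≤ x) :
    a * x ^ (3 / 4 : ℝ) ≤ a ^ 4 + x := by
  have := young_inequality_of_nonneg ha (rpow_nonneg hx (3 / 4)) (p := 4) (q := 4 / 3)
    ⟨by norm_num, by norm_num, by norm_num⟩
  rw [← rpow_mul hx] at this
  norm_num at this
  nlinarith [pow_nonneg ha 4]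

theorem Nat.sum_divisors_rpow_neg_half_le_exp {r : ℕ} (hr : r ≠ 0) :
    ∑ u ∈ r.divisors, (u : ℝ) ^ (-(1 / 2) : ℝ) ≤ exp (8 * √(#r.primeFactors)) := by
  have hinv_sqrt : ∀ x : ℝ, 0 ≤ x → x ^ (-(1 / 2) : ℝ) = (√x)⁻¹ := fun x hx => by
    rw [rpow_neg hx, sqrt_eq_rpow]
  have hle : ∀ p ∈ r.primeFactors, (√p)⁻¹ ≤ (3 / 4 : ℝ) := fun p hp => by
    have h2 : (2 : ℝ) ≤ p := by exact_mod_cast (Nat.prime_of_mem_primeFactors hp).two_le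
    rw [inv_le_comm₀ (by positivity) (by norm_num)]
    exact le_sqrt_of_sq_le (by linarith)
  calc ∑ u ∈ r.divisors, (u : ℝ) ^ (-(1 / 2) : ℝ)
      ≤ ∏ p ∈ r.primeFactors, (1 - (√p)⁻¹)⁻¹ := by
        simpa only [hinv_sqrt _ (Nat.cast_nonneg _)] using
          sum_divisors_rpow_neg_le_prod (by norm_num : (0 : ℝ) < 1 / 2) hr
    _ ≤ exp (4 * ∑ p ∈ r.primeFactors, (√p)⁻¹) :=
        prod_inv_one_sub_le_exp_sum _ (fun _ _ => by positivity) hle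
    _ ≤ exp (8 * √(#r.primeFactors)) := by
        have := sum_inv_sqrt_le_two_sqrt_card r.primeFactors
          (fun h => Nat.not_prime_zero (Nat.prime_of_mem_primeFactors h))
        exact exp_le_exp.2 (by linarith)

/-- If `ω(r) ≤ (log log N)^{3/2}` then `∑_{u ∣ r} u^{-1/2} ≤ exp(O((log log N)^{3/4})) ≪ log N`. -/
theorem divisor_sum_inv_sqrt : ∃ c : ℝ, 0 < c ∧ ∀ N : ℕ, 16 ≤ N → ∀ r : ℕ, 0 < r →
    (r.primeFactors.card : ℝ) ≤ Real.log (Real.log N) ^ ((3 : ℝ) / 2) →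
    (∑ u ∈ r.divisors, (u : ℝ) ^ (-(1 : ℝ) / 2)) ≤
        Real.exp (c * Real.log (Real.log N) ^ ((3 : ℝ) / 4)) ∧
    (∑ u ∈ r.divisors, (u : ℝ) ^ (-(1 : ℝ) / 2)) ≤ c * Real.log N := by
  refine ⟨exp (8 ^ 4), exp_pos _, fun N hN r hr hω => ?_⟩
  have hlogN : 1 ≤ log N := by
    rw [le_log_iff_exp_le (by positivity)]
    have : (16 : ℝ) ≤ N := by exact_mod_cast hN
    linarith [exp_one_lt_d9]
  set x := log (log N)
  have hx : 0 ≤ x := log_nonneg hlogN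
  have hω' : √(#r.primeFactors) ≤ x ^ (3 / 4 : ℝ) := by
    rw [sqrt_le_left (rpow_nonneg hx _), ← rpow_natCast, ← rpow_mul hx]
    convert hω using 2
    norm_num
  have hsum : ∑ u ∈ r.divisors, (u : ℝ) ^ (-(1 : ℝ) / 2) ≤ exp (8 * x ^ (3 / 4 : ℝ)) := by
    rw [neg_div]
    exact (Nat.sum_divisors_rpow_neg_half_le_exp hr.ne').trans (by gcongr)
  refine ⟨hsum.trans (exp_le_exp.2 ?_), ?_⟩
  · gcongr
    linarith [add_one_le_exp (8 ^ 4 : ℝ)]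
  · calc _ ≤ exp (8 * x ^ (3 / 4 : ℝ)) := hsum
      _ ≤ exp (8 ^ 4 + x) := exp_le_exp.2 (mul_rpow_three_quarters_le (by norm_num) hx)
      _ = exp (8 ^ 4) * log N := by rw [exp_add, exp_log (by linarith)]
end

section
/- Let B ≥ 40 be real, let (X, ν) be a probability space, and for each integer N ≥ 1 let A_N : X → ℂ be measurable. Suppose (1) ‖A_N‖_{L¹(X)} ≪ (log N)^{−B} for all N ≥ 3, and (2) for all 3 ≤ N < M ≤ N(1 + (log N)^{−(B/2−1)}) and ν-almost every x, |A_M(x) − A_N(x)| ≤ (log N)^{B/10 − B/2 + 1}. Then for ν-almost every x ∈ X, lim_{N→∞} (log N)^{2B/5 − 2} |A_N(x)| = 0. -/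
/-!
Sample `A` along `N_j = ⌈exp ((j + 1) ^ p)⌉` with `p = 2 / B`, so that `log N_j ≈ j ^ p`. By
Markov's inequality `‖A_{N_j}‖ ≥ (log N_j) ^ (1 - 2B/5)` on a set of measure
`≪ (log N_j) ^ (-(3B/5 + 1))`, and `(3B/5 + 1) p > 1` makes this summable in `j`; by Borel–Cantelli
almost every `x` eventually has `‖A_{N_j} x‖ < (log N_j) ^ (1 - 2B/5)`. Because
`p (B/2 - 1) = 1 - p`, the increment `(j + 2) ^ p - (j + 1) ^ p ≤ p ((j + 1) ^ p) ^ (-(B/2 - 1))`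
is comparable to the admissible gap, and as `2p < 1` this gives
`N_{j+1} ≤ N_j (1 + (log N_j) ^ (-(B/2 - 1)))` for large `j`. Hypothesis (2)
then bounds `‖A_N x‖ ≤ 2 (log N_j) ^ (1 - 2B/5)` on each block `N_j ≤ N < N_{j+1}`, and since
`log N_{j+1} ≤ 3 log N_j` the weight `(log N) ^ (2B/5 - 2)` turns this into `O((log N_j)⁻¹)`.
-/

noncomputable section

open MeasureTheory Filter Real Topology

theorem ae_eventually_norm_lt_of_summable_integral_div {X E : Type*} [MeasurableSpace X]
    {μ : Measure X} [NormedAddCommGroup E] {f : ℕ → X → E} (hf : ∀ j, Integrable (f j) μ)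
    {t : ℕ → ℝ} (ht : ∀ j, 0 < t j) (hs : Summable fun j => (∫ x, ‖f j x‖ ∂μ) / t j) :
    ∀ᵐ x ∂μ, ∀ᶠ j in atTop, ‖f j x‖ < t j := by
  have markov (j : ℕ) :
      μ {x | t j ≤ ‖f j x‖} ≤ ENNReal.ofReal ((∫ x, ‖f j x‖ ∂μ) / t j) :=
    calc μ {x | t j ≤ ‖f j x‖} = μ {x | ENNReal.ofReal (t j) ≤ ‖f j x‖ₑ} := by
          simp only [← ofReal_norm, ENNReal.ofReal_le_ofReal_iff (norm_nonneg _)]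
      _ ≤ (∫⁻ x, ‖f j x‖ₑ ∂μ) / ENNReal.ofReal (t j) :=
          meas_ge_le_lintegral_div (hf j).aestronglyMeasurable.enorm
            (ENNReal.ofReal_pos.2 (ht j)).ne' ENNReal.ofReal_ne_top
      _ = ENNReal.ofReal ((∫ x, ‖f j x‖ ∂μ) / t j) := by
          rw [← ofReal_integral_norm_eq_lintegral_enorm (hf j),
            ENNReal.ofReal_div_of_pos (ht j)]
  have summable_measure : ∑' j, μ {x | t j ≤ ‖f j x‖} ≠ ⊤ := by
    refine ne_top_of_le_ne_top ?_ (ENNReal.tsum_le_tsum markov)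
    rw [← ENNReal.ofReal_tsum_of_nonneg (fun j => by have := ht j; positivity) hs]
    exact ENNReal.ofReal_ne_top
  filter_upwards [ae_eventually_notMem summable_measure] with x hx
  simpa using hx

theorem exists_le_lt_succ_of_tendsto_atTop {n : ℕ → ℕ} (hn : Tendsto n atTop atTop) {J N : ℕ}
    (hJ : n J ≤ N) : ∃ j, J ≤ j ∧ n j ≤ N ∧ N < n (j + 1) := by
  classical
  have hexists : ∃ k, J < k ∧ N < n k :=
    ((eventually_gt_atTop J).and (hn.eventually_gt_atTop N)).exists
  set k := Nat.find hexists
  obtain ⟨hJk, hNk⟩ : J < k ∧ N < n k := Nat.find_spec hexists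
  refine ⟨k - 1, by omega, ?_, by rwa [Nat.sub_add_cancel (by omega)]⟩
  rcases (by omega : J = k - 1 ∨ J < k - 1) with heq | hJlt
  · rwa [← heq]
  · exact not_lt.1 fun h => Nat.find_min hexists (by omega : k - 1 < k) ⟨hJlt, h⟩

theorem tendsto_zero_of_forall_block_norm_le {E : Type*} [SeminormedAddGroup E] {u : ℕ → E}
    {n : ℕ → ℕ} (hn : Tendsto n atTop atTop) {c : ℕ → ℝ} (hc : Tendsto c atTop (𝓝 0))
    (hblock : ∀ᶠ j in atTop, ∀ N, n j ≤ N → N < n (j + 1) → ‖u N‖ ≤ c j) :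
    Tendsto u atTop (𝓝 0) := by
  refine NormedAddGroup.tendsto_nhds_zero.2 fun ε hε => ?_
  obtain ⟨J, hJ⟩ := eventually_atTop.1 (hblock.and (hc.eventually_lt_const hε))
  filter_upwards [eventually_ge_atTop (n J)] with N hN
  obtain ⟨j, hJj, hjN, hNj⟩ := exists_le_lt_succ_of_tendsto_atTop hn hN
  exact ((hJ j hJj).1 N hjN hNj).trans_lt (hJ j hJj).2

theorem rpow_add_one_le_rpow_add_mul {p m : ℝ} (hp0 : 0 ≤ p) (hp1 : p ≤ 1) (hm : 0 < m) :
    (m + 1) ^ p ≤ m ^ p + p * m ^ (p - 1) :=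
  calc (m + 1) ^ p = m ^ p * (1 + m⁻¹) ^ p := by
        rw [← mul_rpow hm.le (by positivity), mul_add, mul_inv_cancel₀ hm.ne', mul_one]
    _ ≤ m ^ p * (1 + p * m⁻¹) := by
        gcongr
        exact rpow_one_add_le_one_add_mul_self (by linarith [inv_pos.2 hm]) hp0 hp1
    _ = m ^ p + p * m ^ (p - 1) := by rw [rpow_sub_one hm.ne']; ring

theorem eventually_mul_rpow_neg_add_exp_neg_le {a : ℝ} (ha : a < 1) (q : ℝ) :
    ∀ᶠ y in atTop, a * y ^ (-q) + exp (-y) ≤ (y + 1) ^ (-q) := by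
  have hleft : Tendsto (fun y => a + y ^ q * exp (-1 * y)) atTop (𝓝 a) := by
    simpa using (tendsto_rpow_mul_exp_neg_mul_atTop_nhds_zero q 1 one_pos).const_add a
  have hright : Tendsto (fun y : ℝ => (1 + y⁻¹) ^ (-q)) atTop (𝓝 1) := by
    simpa using (tendsto_inv_atTop_zero.const_add 1).rpow_const (.inl (by norm_num)) (p := -q)
  filter_upwards [hleft.eventually_lt hright ha, eventually_gt_atTop 0] with y hy hy0
  calc a * y ^ (-q) + exp (-y) = y ^ (-q) * (a + y ^ q * exp (-1 * y)) := by
        rw [mul_add, ← mul_assoc, ← rpow_add hy0, neg_add_cancel, rpow_zero]; ring_nf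
    _ ≤ y ^ (-q) * (1 + y⁻¹) ^ (-q) := by gcongr
    _ = (y + 1) ^ (-q) := by
        rw [← mul_rpow hy0.le (by positivity), mul_add, mul_inv_cancel₀ hy0.ne', mul_one]

def lacunarySeq (p : ℝ) (j : ℕ) : ℕ := ⌈exp (((j : ℝ) + 1) ^ p)⌉₊

namespace lacunarySeq

variable {p : ℝ}

theorem exp_le (p : ℝ) (j : ℕ) : exp (((j : ℝ) + 1) ^ p) ≤ lacunarySeq p j := Nat.le_ceil _

theorem lt_exp_add_one (p : ℝ) (j : ℕ) : (lacunarySeq p j : ℝ) < exp (((j : ℝ) + 1) ^ p) + 1 :=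
  Nat.ceil_lt_add_one (exp_pos _).le

theorem cast_pos (p : ℝ) (j : ℕ) : (0 : ℝ) < lacunarySeq p j := (exp_pos _).trans_le (exp_le p j)

theorem rpow_le_log (p : ℝ) (j : ℕ) : ((j : ℝ) + 1) ^ p ≤ log (lacunarySeq p j) :=
  (le_log_iff_exp_le (cast_pos p j)).2 (exp_le p j)

theorem one_le_rpow (hp : 0 ≤ p) (j : ℕ) : 1 ≤ ((j : ℝ) + 1) ^ p :=
  Real.one_le_rpow (by linarith [j.cast_nonneg (α := ℝ)]) hp

theorem one_le_log (hp : 0 ≤ p) (j : ℕ) : 1 ≤ log (lacunarySeq p j) :=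
  (one_le_rpow hp j).trans (rpow_le_log p j)

theorem log_le (hp : 0 ≤ p) (j : ℕ) : log (lacunarySeq p j) ≤ ((j : ℝ) + 1) ^ p + 1 := by
  set y := ((j : ℝ) + 1) ^ p
  have h2 : (2 : ℝ) ≤ exp 1 := by linarith [add_one_le_exp 1]
  have h1 : 1 ≤ exp y := one_le_exp (by linarith [one_le_rpow hp j])
  rw [log_le_iff_le_exp (cast_pos p j), exp_add]
  nlinarith [lt_exp_add_one p j]

theorem three_le (hp : 0 ≤ p) (j : ℕ) : 3 ≤ lacunarySeq p j := by
  refine Nat.lt_ceil.2 ?_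
  calc ((2 : ℕ) : ℝ) < exp 1 := by norm_num; linarith [exp_one_gt_d9]
    _ ≤ exp (((j : ℝ) + 1) ^ p) := exp_le_exp.2 (one_le_rpow hp j)

theorem tendsto_rpow (hp : 0 < p) : Tendsto (fun j : ℕ => ((j : ℝ) + 1) ^ p) atTop atTop :=
  (tendsto_rpow_atTop hp).comp (tendsto_atTop_add_const_right _ 1 tendsto_natCast_atTop_atTop)

theorem tendsto_atTop (hp : 0 < p) : Tendsto (lacunarySeq p) atTop atTop :=
  tendsto_natCast_atTop_iff.1 <|
    tendsto_atTop_mono (exp_le p) (tendsto_exp_atTop.comp (tendsto_rpow hp))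

theorem tendsto_log (hp : 0 < p) : Tendsto (fun j => log (lacunarySeq p j)) atTop atTop :=
  tendsto_atTop_mono (rpow_le_log p) (tendsto_rpow hp)

theorem log_succ_le (hp0 : 0 ≤ p) (hp1 : p ≤ 1) (j : ℕ) :
    log (lacunarySeq p (j + 1)) ≤ 3 * log (lacunarySeq p j) := by
  have hstep : ((j : ℝ) + 1 + 1) ^ p ≤ ((j : ℝ) + 1) ^ p + 1 := by
    simpa using rpow_add_le_add_rpow (by positivity) zero_le_one hp0 hp1 (a := (j : ℝ) + 1)
  have := log_le hp0 (j + 1)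
  push_cast at this
  linarith [rpow_le_log p j, one_le_rpow hp0 j]

theorem summable_log_rpow_neg {r : ℝ} (hp : 0 ≤ p) (hpr : 1 < p * r) :
    Summable fun j => log (lacunarySeq p j) ^ (-r) := by
  have hr : 0 ≤ r := by
    by_contra! hr
    nlinarith
  have hsum : Summable fun j : ℕ => ((j : ℝ) + 1) ^ (-(p * r)) := by
    simpa using (summable_nat_add_iff 1).2 (summable_nat_rpow.2 (neg_lt_neg hpr))
  refine .of_nonneg_of_le (fun j => rpow_nonneg (by linarith [one_le_log hp j]) _)
    (fun j => ?_) hsum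
  calc log (lacunarySeq p j) ^ (-r) ≤ (((j : ℝ) + 1) ^ p) ^ (-r) :=
        rpow_le_rpow_of_nonpos (by linarith [one_le_rpow hp j]) (rpow_le_log p j) (by linarith)
    _ = ((j : ℝ) + 1) ^ (-(p * r)) := by rw [← rpow_mul (by positivity), mul_neg]

theorem tendsto_log_succ_rpow_mul_log_rpow {s t : ℝ} (hp0 : 0 < p) (hp1 : p ≤ 1) (hs : 0 ≤ s)
    (hst : s + t = -1) :
    Tendsto (fun j => log (lacunarySeq p (j + 1)) ^ s * log (lacunarySeq p j) ^ t)
      atTop (𝓝 0) := by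
  refine squeeze_zero (fun j => ?_) (fun j => ?_)
    (by simpa using (tendsto_log hp0).inv_tendsto_atTop.const_mul (3 ^ s))
  · have := one_le_log hp0.le j
    have := one_le_log hp0.le (j + 1)
    positivity
  · have hℓ := one_le_log hp0.le j
    calc log (lacunarySeq p (j + 1)) ^ s * log (lacunarySeq p j) ^ t
        ≤ (3 * log (lacunarySeq p j)) ^ s * log (lacunarySeq p j) ^ t := by
          gcongr
          exact log_succ_le hp0.le hp1 j
      _ = 3 ^ s * (log (lacunarySeq p j))⁻¹ := by
          rw [mul_rpow (by norm_num) (by linarith), mul_assoc, ← rpow_add (by linarith), hst,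
            rpow_neg_one]

theorem eventually_succ_le {q : ℝ} (hp0 : 0 < p) (hp : p < 1 / 2) (hpq : p * (q + 1) = 1) :
    ∀ᶠ j in atTop, (lacunarySeq p (j + 1) : ℝ) ≤
      lacunarySeq p j * (1 + log (lacunarySeq p j) ^ (-q)) := by
  filter_upwards [(tendsto_rpow hp0).eventually
    (eventually_mul_rpow_neg_add_exp_neg_le (a := 2 * p) (by linarith) q)] with j hj
  set m : ℝ := (j : ℝ) + 1
  set y : ℝ := m ^ p
  have hm : 1 ≤ m := by simp [m]
  have hq : 0 ≤ q := by nlinarith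
  have hy : m ^ (p - 1) = y ^ (-q) := by rw [← rpow_mul (by linarith)]; congr 1; linarith
  set δ := p * y ^ (-q)
  have hδ0 : 0 ≤ δ := by positivity
  have hδ1 : δ ≤ 1 := by
    nlinarith [rpow_le_one_of_one_le_of_nonpos (one_le_rpow hp0.le j) (neg_nonpos.2 hq)]
  have hexp : exp δ ≤ 1 + 2 * δ := by
    have := abs_exp_sub_one_le (x := δ) (by rwa [abs_of_nonneg hδ0])
    rw [abs_of_nonneg hδ0] at this
    linarith [le_abs_self (exp δ - 1)]
  refine le_of_lt ?_
  calc (lacunarySeq p (j + 1) : ℝ) < exp ((m + 1) ^ p) + 1 := by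
        simpa [m] using lt_exp_add_one p (j + 1)
    _ ≤ exp (y + δ) + 1 := by
        gcongr
        simpa [hy, δ] using
          rpow_add_one_le_rpow_add_mul hp0.le (by linarith) (by linarith : 0 < m)
    _ = exp y * (exp δ + exp (-y)) := by
        rw [exp_add, mul_add, ← exp_add y (-y), add_neg_cancel, exp_zero]
    _ ≤ exp y * (1 + (y + 1) ^ (-q)) :=
        mul_le_mul_of_nonneg_left (by linarith) (exp_pos y).le
    _ ≤ lacunarySeq p j * (1 + log (lacunarySeq p j) ^ (-q)) :=
        mul_le_mul (exp_le p j)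
          (add_le_add_right (rpow_le_rpow_of_nonpos (by linarith [one_le_log hp0.le j])
            (log_le hp0.le j) (neg_nonpos.2 hq)) 1) (by positivity) (cast_pos p j).le

theorem summable_integral_norm_div_log_rpow {X E : Type*} [MeasurableSpace X] {μ : Measure X}
    [NormedAddCommGroup E] {f : ℕ → X → E} {r e c : ℝ} (hp : 0 ≤ p) (hpre : 1 < p * (r + e))
    (hf : ∀ N : ℕ, 3 ≤ N → ∫ x, ‖f N x‖ ∂μ ≤ c * log N ^ (-r)) :
    Summable fun j => (∫ x, ‖f (lacunarySeq p j) x‖ ∂μ) / log (lacunarySeq p j) ^ e := by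
  refine .of_nonneg_of_le (fun j => by positivity) (fun j => ?_)
    ((summable_log_rpow_neg hp hpre).mul_left c)
  have hℓ : 0 < log (lacunarySeq p j) := by linarith [one_le_log hp j]
  calc (∫ x, ‖f (lacunarySeq p j) x‖ ∂μ) / log (lacunarySeq p j) ^ e
      ≤ c * log (lacunarySeq p j) ^ (-r) / log (lacunarySeq p j) ^ e := by
        gcongr
        exact hf _ (three_le hp j)
    _ = c * log (lacunarySeq p j) ^ (-(r + e)) := by
        rw [mul_div_assoc, ← rpow_sub hℓ]; ring_nf

theorem tendsto_log_rpow_mul_norm {E : Type*} [SeminormedAddGroup E] {a : ℕ → E}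
    {p q s t : ℝ} (hp0 : 0 < p) (hp : p < 1 / 2) (hpq : p * (q + 1) = 1) (hs : 0 ≤ s)
    (hst : s + t = -1)
    (hlac : ∀ᶠ j in atTop, ‖a (lacunarySeq p j)‖ < log (lacunarySeq p j) ^ t)
    (hstable : ∀ N M : ℕ, 3 ≤ N → N < M → (M : ℝ) ≤ N * (1 + log N ^ (-q)) →
      ‖a M - a N‖ ≤ log N ^ t) :
    Tendsto (fun N : ℕ => log N ^ s * ‖a N‖) atTop (𝓝 0) := by
  set n := lacunarySeq p
  refine tendsto_zero_of_forall_block_norm_le (tendsto_atTop hp0)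
    (by simpa using (tendsto_log_succ_rpow_mul_log_rpow hp0 (by linarith) hs
      hst).const_mul 2) ?_
  filter_upwards [hlac, eventually_succ_le hp0 hp hpq] with j hj hgap N hjN hNj
  have hN : (0 : ℝ) < N := (cast_pos p j).trans_le (by exact_mod_cast hjN)
  have ha : ‖a N‖ ≤ 2 * log (n j) ^ t := by
    rcases hjN.eq_or_lt with rfl | hlt
    · linarith [rpow_nonneg (log_natCast_nonneg (n j)) t]
    · have hgap' : (N : ℝ) ≤ n j * (1 + log (n j) ^ (-q)) :=
        le_trans (by exact_mod_cast hNj.le) hgap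
      linarith [norm_le_norm_add_norm_sub' (a N) (a (n j)),
        hstable _ N (three_le hp0.le j) hlt hgap']
  have hw : log N ^ s ≤ log (n (j + 1)) ^ s :=
    rpow_le_rpow (log_natCast_nonneg N) (log_le_log hN (by exact_mod_cast hNj.le)) hs
  rw [norm_of_nonneg (by positivity)]
  calc log N ^ s * ‖a N‖ ≤ log (n (j + 1)) ^ s * (2 * log (n j) ^ t) :=
        mul_le_mul hw ha (norm_nonneg _) (by positivity)
    _ = _ := by ring

end lacunarySeq

theorem lacunary_trick_general (B : ℝ) (hB : 40 ≤ B) {X : Type*} [MeasurableSpace X]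
    (ν : Measure X) (A : ℕ → X → ℂ) (hint : ∀ N, Integrable (A N) ν)
    (h1 : ∃ c : ℝ, 0 < c ∧ ∀ N : ℕ, 3 ≤ N →
      ∫ x, ‖A N x‖ ∂ν ≤ c * Real.log N ^ (-B))
    (h2 : ∀ N M : ℕ, 3 ≤ N → N < M → (M : ℝ) ≤ N * (1 + Real.log N ^ (-(B / 2 - 1))) →
      ∀ᵐ x ∂ν, ‖A M x - A N x‖ ≤ Real.log N ^ (B / 10 - B / 2 + 1)) :
    ∀ᵐ x ∂ν, Tendsto (fun N : ℕ => Real.log N ^ (2 * B / 5 - 2) * ‖A N x‖)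
      atTop (nhds 0) := by
  obtain ⟨c, -, hL1⟩ := h1
  have hp : 0 < 2 / B := by positivity
  have hmarkov : ∀ᵐ x ∂ν, ∀ᶠ j in atTop,
      ‖A (lacunarySeq (2 / B) j) x‖ < log (lacunarySeq (2 / B) j) ^ (B / 10 - B / 2 + 1) :=
    ae_eventually_norm_lt_of_summable_integral_div (fun j => hint _)
      (fun j => rpow_pos_of_pos (by linarith [lacunarySeq.one_le_log hp.le j]) _)
      (lacunarySeq.summable_integral_norm_div_log_rpow hp.le
        (by rw [div_mul_eq_mul_div, lt_div_iff₀ (by linarith)]; linarith) hL1)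
  have hstable : ∀ᵐ x ∂ν, ∀ N M : ℕ, 3 ≤ N → N < M →
      (M : ℝ) ≤ N * (1 + log N ^ (-(B / 2 - 1))) →
        ‖A M x - A N x‖ ≤ log N ^ (B / 10 - B / 2 + 1) := by
    simpa only [ae_all_iff, eventually_imp_distrib_left] using h2
  filter_upwards [hmarkov, hstable] with x hx_markov hx_stable
  exact lacunarySeq.tendsto_log_rpow_mul_norm hp
    (by rw [div_lt_div_iff₀ (by linarith) (by norm_num)]; linarith) (by field_simp; ring)
    (by linarith) (by ring) hx_markov hx_stable

/-- The lacunary subsequence trick: quantitative `L¹` decay plus stability on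
multiplicatively short ranges gives pointwise a.e. convergence to `0` at a
polylogarithmic rate. -/
theorem lacunary_trick (B : ℝ) (hB : 40 ≤ B) {X : Type*} [MeasurableSpace X]
    (ν : Measure X) [IsProbabilityMeasure ν]
    (A : ℕ → X → ℂ) (hint : ∀ N, Integrable (A N) ν)
    (h1 : ∃ c : ℝ, 0 < c ∧ ∀ N : ℕ, 3 ≤ N →
      ∫ x, ‖A N x‖ ∂ν ≤ c * Real.log N ^ (-B))
    (h2 : ∀ N M : ℕ, 3 ≤ N → N < M → (M : ℝ) ≤ N * (1 + Real.log N ^ (-(B / 2 - 1))) →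
      ∀ᵐ x ∂ν, ‖A M x - A N x‖ ≤ Real.log N ^ (B / 10 - B / 2 + 1)) :
    ∀ᵐ x ∂ν, Tendsto (fun N : ℕ => Real.log N ^ (2 * B / 5 - 2) * ‖A N x‖)
      atTop (nhds 0) :=
  lacunary_trick_general B hB ν A hint h1 h2
end
end
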